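/- Let T and U be Silver trees and let f : 2^ω × ω^ω → 2^ω be continuous on [T] × ω^ω. Let σ ∈ 2^{<ω}, v ∈ ω^{<ω}, and k < ω. Then there exist a tuple w ∈ ω^{<ω} with v ⊆ w and Silver trees S ⊑_{k+1} T and V ⊑_{k+1} U such that f(a,x) ∉ σ⊕[V] for all a ∈ [S] and x ∈ B_w. -/

import Mathlib

open Set

/-- The word `u₀⌢i₀⌢u₁⌢i₁⌢…⌢u_n⌢i_n` built from the defining tuples `u`
and the choice of bits `i`. -/
def silverWord (u : ℕ → List Bool) (i : ℕ → Bool) : ℕ → List Bool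
  | 0 => u 0 ++ [i 0]
  | n + 1 => silverWord u i n ++ (u (n + 1) ++ [i (n + 1)])

/-- `T ⊆ 2^{<ω}` is the Silver tree with defining tuples `u`: it consists of all
tuples `u₀⌢i₀⌢…⌢u_n⌢i_n` together with all their initial segments. -/
def IsSilver (T : Set (List Bool)) (u : ℕ → List Bool) : Prop :=
  T = { s | ∃ (n : ℕ) (i : ℕ → Bool), s <+: silverWord u i n }

/-- `T` is a Silver tree. -/
def SilverTree (T : Set (List Bool)) : Prop :=
  ∃ u, IsSilver T u

/-- The portion `T↾u = {s ∈ T : u ⊆ s or s ⊆ u}`. -/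
def portion (T : Set (List Bool)) (u : List Bool) : Set (List Bool) :=
  { s ∈ T | u <+: s ∨ s <+: u }

/-- The shift `σ⊕v` of a tuple `v` by a tuple `σ` (coordinatewise mod-2 sum,
with `σ` padded by `0` or truncated to the length of `v`). -/
def shiftT (σ v : List Bool) : List Bool :=
  List.ofFn fun i : Fin v.length => xor (v.get i) (σ.getD i.1 false)

/-- The shift `σ⊕T` of a set of tuples. -/
def shiftTree (σ : List Bool) (T : Set (List Bool)) : Set (List Bool) :=
  shiftT σ '' T

/-- The shift `σ⊕a` of a point of Cantor space. -/
def shiftR (σ : List Bool) (a : ℕ → Bool) : ℕ → Bool :=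
  fun i => xor (a i) (σ.getD i false)

/-- The restriction `a↾n ∈ 2^{<ω}` of `a ∈ 2^ω`. -/
def restrictReal (a : ℕ → Bool) (n : ℕ) : List Bool :=
  List.ofFn fun i : Fin n => a i.1

/-- `[T]`, the set of branches of `T`. -/
def branches (T : Set (List Bool)) : Set (ℕ → Bool) :=
  { a | ∀ n, restrictReal a n ∈ T }

/-- The splitting levels `oi_T(n) = |u₀|+1+…+|u_{n-1}|+1+|u_n|` computed
from the defining tuples `u`. -/
def oi (u : ℕ → List Bool) (n : ℕ) : ℕ :=
  (∑ k ∈ Finset.range (n + 1), (u k).length) + n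

/-- `S ⊑ₙ T` : `S ⊆ T` and the first `n` splitting levels agree. -/
def RefinesN (S T : Set (List Bool)) (n : ℕ) : Prop :=
  S ⊆ T ∧ ∀ uS uT : ℕ → List Bool, IsSilver S uS → IsSilver T uT →
    ∀ k < n, oi uS k = oi uT k

/-- `S` is clopen in `T` : `S` is a finite union of portions of `T`. -/
def ClopenIn (S T : Set (List Bool)) : Prop :=
  ∃ F : Finset (List Bool), ↑F ⊆ T ∧ S = ⋃ u ∈ F, portion T u

/-- The Baire interval `B_v = {x ∈ ω^ω : v ⊂ x}`. -/
def baire (v : List ℕ) : Set (ℕ → ℕ) :=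
  { x | ∀ i : Fin v.length, x i.1 = v.get i }

/-- `s ∈ 2^{<ω}` is an initial segment of `a ∈ 2^ω`. -/
def prefixOfReal (s : List Bool) (a : ℕ → Bool) : Prop :=
  ∀ i : Fin s.length, a i.1 = s.get i

/-! Freezing splitting bits of a Silver tree (merging a bit into the neighbouring blocks) keeps
the earlier splitting levels. Index the `2 ^ (k + 1)` choices `t` of the first `k + 1` splitting
bits of `T`, let `aₜ ∈ [T]` have bits `t` followed by zeros, and let `x₀` extend `v` by zeros. In
`U`, freeze the `t`-th splitting bit after level `k` to the complement of the bit of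
`σ ⊕ f(aₜ, x₀)` at that level: this gives `V`. By continuity there is `m` such that `f(a, x)`
agrees with `f(aₜ, x₀)` at these finitely many levels as soon as `a` agrees with `aₜ` and `x` with
`x₀` below `m`. Freezing `m` splitting bits of `T` after level `k` to zero gives `S`, every branch
of which agrees below `m` with some `aₜ`. -/

open PiNat Topology

theorem List.IsPrefix.getD_eq {α : Type*} {l₁ l₂ : List α} (h : l₁ <+: l₂) {n : ℕ}
    (hn : n < l₁.length) (d : α) : l₁.getD n d = l₂.getD n d := by
  rw [List.getD_eq_getElem _ _ hn, List.getD_eq_getElem _ _ (hn.trans_le h.length_le)]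
  exact h.getElem hn

theorem List.prefix_ofFn_getD {α : Type*} {v : List α} {m : ℕ} (h : v.length ≤ m) (d : α) :
    v <+: List.ofFn fun l : Fin m => v.getD l d := by
  rw [List.prefix_iff_eq_take]
  refine List.ext_getElem (by simp [h]) fun l h₁ _ => ?_
  simp [List.getElem?_eq_getElem h₁]

theorem PiNat.exists_cylinder_subset {E : ℕ → Type*} [∀ n, TopologicalSpace (E n)]
    [∀ n, DiscreteTopology (E n)] {x : ∀ n, E n} {s : Set (∀ n, E n)} (hs : s ∈ 𝓝 x) :
    ∃ n, cylinder x n ⊆ s := by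
  obtain ⟨_, ⟨y, n, rfl⟩, hx, hsub⟩ := (isTopologicalBasis_cylinders E).mem_nhds_iff.1 hs
  exact ⟨n, mem_cylinder_iff_eq.1 hx ▸ hsub⟩

theorem exists_cylinder_eq_of_continuousOn {α β γ : Type*} [TopologicalSpace α]
    [DiscreteTopology α] [TopologicalSpace β] [DiscreteTopology β] [TopologicalSpace γ]
    [DiscreteTopology γ] {A : Set (ℕ → α)} {g : (ℕ → α) × (ℕ → β) → γ}
    (hg : ContinuousOn g (A ×ˢ univ)) {a₀ : ℕ → α} (ha₀ : a₀ ∈ A) (x₀ : ℕ → β) :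
    ∃ n, ∀ a ∈ A, ∀ x, a ∈ cylinder a₀ n → x ∈ cylinder x₀ n → g (a, x) = g (a₀, x₀) := by
  have hpre : g ⁻¹' {g (a₀, x₀)} ∈ 𝓝[A ×ˢ univ] (a₀, x₀) :=
    hg _ ⟨ha₀, trivial⟩ ((isOpen_discrete _).mem_nhds rfl)
  obtain ⟨W, hW, hWsub⟩ := mem_nhdsWithin_iff_exists_mem_nhds_inter.1 hpre
  obtain ⟨P, hP, Q, hQ, hPQ⟩ := mem_nhds_prod_iff.1 hW
  obtain ⟨n₁, hn₁⟩ := exists_cylinder_subset hP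
  obtain ⟨n₂, hn₂⟩ := exists_cylinder_subset hQ
  refine ⟨max n₁ n₂, fun a ha x hax hxx => hWsub ⟨hPQ ⟨?_, ?_⟩, ha, trivial⟩⟩
  · exact hn₁ (cylinder_anti _ (le_max_left _ _) hax)
  · exact hn₂ (cylinder_anti _ (le_max_right _ _) hxx)

theorem baire_ofFn (x : ℕ → ℕ) (m : ℕ) : baire (List.ofFn fun l : Fin m => x l) = cylinder x m := by
  ext y
  simp [baire, mem_cylinder_iff, Fin.forall_iff]

theorem shiftR_shiftR (σ : List Bool) (a : ℕ → Bool) : shiftR σ (shiftR σ a) = a := by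
  funext l
  simp [shiftR]

namespace Silver

def tree (u : ℕ → List Bool) : Set (List Bool) :=
  { s | ∃ (n : ℕ) (i : ℕ → Bool), s <+: silverWord u i n }

theorem isSilver_tree (u : ℕ → List Bool) : IsSilver (tree u) u := rfl

section Words

variable (u : ℕ → List Bool) (i : ℕ → Bool)

theorem oi_zero : oi u 0 = (u 0).length := by simp [oi]

theorem oi_succ (n : ℕ) : oi u (n + 1) = oi u n + (u (n + 1)).length + 1 := by
  simp only [oi, Finset.sum_range_succ]; ring

theorem oi_strictMono : StrictMono (oi u) :=
  strictMono_nat_of_lt_succ fun n => by rw [oi_succ]; omega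

theorem le_oi (n : ℕ) : n ≤ oi u n := by simp [oi]

theorem silverWord_succ (n : ℕ) :
    silverWord u i (n + 1) = silverWord u i n ++ (u (n + 1) ++ [i (n + 1)]) := rfl

theorem length_silverWord (n : ℕ) : (silverWord u i n).length = oi u n + 1 := by
  induction n with
  | zero => simp [silverWord, oi]
  | succ n ih =>
    rw [silverWord_succ, List.length_append, List.length_append, List.length_singleton, ih,
      oi_succ]
    omega

theorem silverWord_prefix_of_le {m n : ℕ} (h : m ≤ n) : silverWord u i m <+: silverWord u i n := by
  induction n, h using Nat.le_induction with
  | base => exact List.prefix_rfl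
  | succ n _ ih => exact ih.trans ⟨_, rfl⟩

theorem silverWord_congr {u' : ℕ → List Bool} {i' : ℕ → Bool} {n : ℕ}
    (h : ∀ j ≤ n, u j = u' j ∧ i j = i' j) : silverWord u i n = silverWord u' i' n := by
  induction n with
  | zero => simp [silverWord, (h 0 le_rfl).1, (h 0 le_rfl).2]
  | succ n ih =>
    rw [silverWord_succ, silverWord_succ, ih fun j hj => h j (hj.trans n.le_succ),
      (h (n + 1) le_rfl).1, (h (n + 1) le_rfl).2]

theorem getD_silverWord_oi {n j : ℕ} (hj : j ≤ n) :
    (silverWord u i n).getD (oi u j) false = i j := by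
  induction n with
  | zero =>
    obtain rfl : j = 0 := Nat.le_zero.1 hj
    simp [silverWord, oi_zero]
  | succ n ih =>
    rw [silverWord_succ]
    rcases Nat.le_succ_iff.1 hj with hj | rfl
    · rw [List.getD_append _ _ _ _ (by
        rw [length_silverWord]; exact Nat.lt_succ_of_le ((oi_strictMono u).monotone hj)), ih hj]
    · rw [List.getD_append_right _ _ _ _ (by rw [length_silverWord, oi_succ]; omega),
        length_silverWord, oi_succ, List.getD_append_right _ _ _ _ (by omega)]
      simp

theorem getD_silverWord_eq_of_ne_oi (i' : ℕ → Bool) {n l : ℕ} (hl : l ≤ oi u n)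
    (hne : ∀ j, l ≠ oi u j) :
    (silverWord u i n).getD l false = (silverWord u i' n).getD l false := by
  induction n with
  | zero =>
    have hl' : l < (u 0).length := by have := hne 0; rw [oi_zero] at hl this; omega
    simp only [silverWord, List.getD_append _ _ _ _ hl']
  | succ n ih =>
    rw [silverWord_succ, silverWord_succ]
    rcases Nat.lt_or_ge l (oi u n + 1) with h | h
    · rw [List.getD_append _ _ _ _ (by rwa [length_silverWord]),
        List.getD_append _ _ _ _ (by rwa [length_silverWord]), ih (by omega)]
    · have hq : l - (oi u n + 1) < (u (n + 1)).length := by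
        have := hne (n + 1); rw [oi_succ] at hl this; omega
      rw [List.getD_append_right (silverWord u i n) _ _ _ (by rwa [length_silverWord]),
        List.getD_append_right (silverWord u i' n) _ _ _ (by rwa [length_silverWord]),
        length_silverWord, length_silverWord, List.getD_append _ _ _ _ hq,
        List.getD_append _ _ _ _ hq]

theorem exists_forall_append_mem_tree (n : ℕ) :
    ∃ B : List Bool, B.length = oi u n ∧ ∀ b, B ++ [b] ∈ tree u := by
  cases n with
  | zero => exact ⟨u 0, (oi_zero u).symm, fun b => ⟨0, fun _ => b, List.prefix_rfl⟩⟩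
  | succ n =>
    refine ⟨silverWord u (fun _ => false) n ++ u (n + 1),
      by rw [List.length_append, length_silverWord, oi_succ]; omega,
      fun b => ⟨n + 1, fun j => if j = n + 1 then b else false, ?_⟩⟩
    rw [silverWord_succ,
      silverWord_congr u _ (i' := fun _ => false) fun j hj => ⟨rfl, if_neg (by omega)⟩]
    simp

theorem silverWord_mem_tree (n : ℕ) : silverWord u i n ∈ tree u := ⟨n, i, List.prefix_rfl⟩

theorem mem_tree_of_prefix {s t : List Bool} (h : s <+: t) (ht : t ∈ tree u) : s ∈ tree u := by
  obtain ⟨n, i, hn⟩ := ht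
  exact ⟨n, i, h.trans hn⟩

theorem exists_eq_silverWord_of_mem_tree {s : List Bool} (hs : s ∈ tree u) {n : ℕ}
    (hl : s.length = oi u n + 1) : ∃ i, s = silverWord u i n := by
  obtain ⟨n', i, hpre⟩ := hs
  have hnn : n ≤ n' := by
    have := hpre.length_le
    rw [hl, length_silverWord] at this
    exact (oi_strictMono u).le_iff_le.1 (by omega)
  exact ⟨i, (List.prefix_of_prefix_length_le hpre (silverWord_prefix_of_le u i hnn)
    (by rw [hl, length_silverWord])).eq_of_length (by rw [hl, length_silverWord])⟩

end Words

def splitLevels (T : Set (List Bool)) : Set ℕ :=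
  { l | ∃ s : List Bool, s.length = l ∧ s ++ [true] ∈ T ∧ s ++ [false] ∈ T }

theorem splitLevels_tree (u : ℕ → List Bool) : splitLevels (tree u) = range (oi u) := by
  ext l
  constructor
  · rintro ⟨s, rfl, ⟨n₁, i₁, h₁⟩, ⟨n₂, i₂, h₂⟩⟩
    by_contra hne
    have hlen : s.length ≤ oi u (n₁ + n₂) := by
      have h := h₁.length_le
      rw [length_silverWord, List.length_append, List.length_singleton] at h
      have := (oi_strictMono u).monotone (Nat.le_add_right n₁ n₂)
      omega
    have hget : ∀ {b i n}, s ++ [b] <+: silverWord u i n → n ≤ n₁ + n₂ →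
        (silverWord u i (n₁ + n₂)).getD s.length false = b := by
      intro b i n h hn
      rw [← (h.trans (silverWord_prefix_of_le u i hn)).getD_eq (by simp)]
      simp
    have := getD_silverWord_eq_of_ne_oi u i₁ i₂ hlen fun j hj => hne ⟨j, hj.symm⟩
    rw [hget h₁ (Nat.le_add_right _ _), hget h₂ (Nat.le_add_left _ _)] at this
    exact Bool.noConfusion this
  · rintro ⟨n, rfl⟩
    obtain ⟨B, hB, hBmem⟩ := exists_forall_append_mem_tree u n
    exact ⟨B, hB, hBmem true, hBmem false⟩

theorem oi_eq_of_isSilver {T : Set (List Bool)} {u u' : ℕ → List Bool} (h : IsSilver T u)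
    (h' : IsSilver T u') : oi u = oi u' := by
  have htree : tree u = tree u' := h.symm.trans h'
  have : range (oi u) = range (oi u') := by
    rw [← splitLevels_tree, ← splitLevels_tree, htree]
  exact ((oi_strictMono u).range_inj (oi_strictMono u')).1 this

theorem refinesN_tree {u u' : ℕ → List Bool} {r : ℕ} (hsub : tree u' ⊆ tree u)
    (hoi : ∀ j < r, oi u' j = oi u j) : RefinesN (tree u') (tree u) r :=
  ⟨hsub, fun _ _ hS hT j hj => by
    rw [oi_eq_of_isSilver hS (isSilver_tree u'), oi_eq_of_isSilver hT (isSilver_tree u), hoi j hj]⟩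

section Branches

variable {u : ℕ → List Bool}

theorem length_restrictReal (a : ℕ → Bool) (n : ℕ) : (restrictReal a n).length = n := by
  simp [restrictReal]

theorem getD_restrictReal (a : ℕ → Bool) {n l : ℕ} (h : l < n) :
    (restrictReal a n).getD l false = a l := by
  simp [restrictReal, List.getD_eq_getElem?_getD, h]

theorem branches_mono {S T : Set (List Bool)} (h : S ⊆ T) : branches S ⊆ branches T :=
  fun _ ha n => h (ha n)

theorem exists_restrictReal_eq_silverWord {a : ℕ → Bool} (ha : a ∈ branches (tree u)) (n : ℕ) :
    ∃ i, restrictReal a (oi u n + 1) = silverWord u i n :=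
  exists_eq_silverWord_of_mem_tree u (ha _) (length_restrictReal _ _)

theorem apply_oi_of_restrictReal_eq {a : ℕ → Bool} {i : ℕ → Bool} {n j : ℕ}
    (hi : restrictReal a (oi u n + 1) = silverWord u i n) (hj : j ≤ n) : a (oi u j) = i j := by
  rw [← getD_restrictReal a (Nat.lt_succ_of_le ((oi_strictMono u).monotone hj)), hi,
    getD_silverWord_oi u i hj]

theorem eq_of_apply_oi_eq {a a' : ℕ → Bool} (ha : a ∈ branches (tree u))
    (ha' : a' ∈ branches (tree u)) {n : ℕ} (h : ∀ j ≤ n, a (oi u j) = a' (oi u j)) {l : ℕ}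
    (hl : l ≤ oi u n) : a l = a' l := by
  obtain ⟨i, hi⟩ := exists_restrictReal_eq_silverWord ha n
  obtain ⟨i', hi'⟩ := exists_restrictReal_eq_silverWord ha' n
  have hword : silverWord u i n = silverWord u i' n := silverWord_congr u i fun j hj =>
    ⟨rfl, by rw [← apply_oi_of_restrictReal_eq hi hj, ← apply_oi_of_restrictReal_eq hi' hj, h j hj]⟩
  rw [← getD_restrictReal a (Nat.lt_succ_of_le hl), ← getD_restrictReal a' (Nat.lt_succ_of_le hl),
    hi, hi', hword]

variable (u)

/-- The branch of `tree u` whose splitting bits are `i`. -/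
def branch (i : ℕ → Bool) : ℕ → Bool :=
  fun l => (silverWord u i l).getD l false

theorem branch_apply_eq_getD (i : ℕ → Bool) {n l : ℕ} (hl : l ≤ oi u n) :
    branch u i l = (silverWord u i n).getD l false := by
  rcases le_total l n with h | h
  · exact (silverWord_prefix_of_le u i h).getD_eq
      (by rw [length_silverWord]; have := le_oi u l; omega) false
  · exact ((silverWord_prefix_of_le u i h).getD_eq (by rw [length_silverWord]; omega) false).symm

theorem branch_apply_oi (i : ℕ → Bool) (j : ℕ) : branch u i (oi u j) = i j := by
  rw [branch_apply_eq_getD u i le_rfl, getD_silverWord_oi u i le_rfl]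

theorem branch_mem_branches (i : ℕ → Bool) : branch u i ∈ branches (tree u) := by
  intro m
  have hm : m ≤ oi u m := le_oi u m
  refine mem_tree_of_prefix u (List.prefix_iff_eq_take.2 ?_) (silverWord_mem_tree u i m)
  refine List.ext_getElem (by rw [List.length_take, length_restrictReal, length_silverWord]; omega)
    fun l h₁ _ => ?_
  rw [length_restrictReal] at h₁
  rw [← List.getD_eq_getElem _ false, getD_restrictReal _ h₁, List.getElem_take,
    ← List.getD_eq_getElem _ false, branch_apply_eq_getD u i (n := m) (by omega)]

end Branches

section Fix

variable (u : ℕ → List Bool) (r : ℕ) (c : Bool)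

/-- Fixing the `r`-th splitting bit to `c`: the blocks `u r`, `c`, `u (r + 1)` are merged. -/
def fix : ℕ → List Bool :=
  fun j => if j < r then u j else if j = r then u r ++ c :: u (r + 1) else u (j + 1)

/-- The splitting bits of `tree u` that produce the word of `tree (fix u r c)` with bits `i`. -/
def splice (i : ℕ → Bool) : ℕ → Bool :=
  fun j => if j < r then i j else if j = r then c else i (j - 1)

theorem silverWord_fix_of_lt (i : ℕ → Bool) {n : ℕ} (hn : n < r) :
    silverWord (fix u r c) i n = silverWord u i n :=
  silverWord_congr _ _ fun j hj => ⟨by simp [fix, hj.trans_lt hn], rfl⟩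

theorem silverWord_fix_of_le (i : ℕ → Bool) {n : ℕ} (hn : r ≤ n) :
    silverWord (fix u r c) i n = silverWord u (splice r c i) (n + 1) := by
  induction n, hn using Nat.le_induction with
  | base =>
    cases r with
    | zero => simp [silverWord, fix, splice]
    | succ r =>
      have hpre : silverWord u (splice (r + 1) c i) r = silverWord u i r :=
        silverWord_congr _ _ fun j hj => ⟨rfl, if_pos (by omega)⟩
      rw [silverWord_succ, silverWord_fix_of_lt u _ c i (Nat.lt_succ_self r), silverWord_succ,
        silverWord_succ, hpre]
      simp [fix, splice]
  | succ n hrn ih =>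
    rw [silverWord_succ, ih, silverWord_succ u _ (n + 1)]
    simp only [fix, splice, List.append_cancel_left_eq]
    split_ifs <;> first | rfl | omega

theorem tree_fix_subset : tree (fix u r c) ⊆ tree u := by
  rintro s ⟨n, i, hs⟩
  rcases Nat.lt_or_ge n r with h | h
  · exact ⟨n, i, silverWord_fix_of_lt u r c i h ▸ hs⟩
  · exact ⟨n + 1, _, silverWord_fix_of_le u r c i h ▸ hs⟩

theorem oi_fix_of_lt {n : ℕ} (hn : n < r) : oi (fix u r c) n = oi u n := by
  simpa [length_silverWord] using
    congrArg List.length (silverWord_fix_of_lt u r c (fun _ => false) hn)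

theorem oi_fix_of_le {n : ℕ} (hn : r ≤ n) : oi (fix u r c) n = oi u (n + 1) := by
  simpa [length_silverWord] using
    congrArg List.length (silverWord_fix_of_le u r c (fun _ => false) hn)

theorem apply_oi_of_mem_branches_fix {a : ℕ → Bool} (ha : a ∈ branches (tree (fix u r c))) :
    a (oi u r) = c := by
  obtain ⟨i, hi⟩ := exists_restrictReal_eq_silverWord ha r
  rw [silverWord_fix_of_le u r c i le_rfl, oi_fix_of_le u r c le_rfl] at hi
  simp [apply_oi_of_restrictReal_eq hi r.le_succ, splice]

end Fix

section FixIter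

variable (u : ℕ → List Bool) (r : ℕ) (c : ℕ → Bool)

/-- Fixing the splitting bits at the levels `r, r + 1, …, r + s - 1` of `tree u` to
`c 0, c 1, …, c (s - 1)`. -/
def fixIter : ℕ → ℕ → List Bool
  | 0 => u
  | s + 1 => fix (fixIter s) r (c s)

theorem tree_fixIter_subset_of_le {s t : ℕ} (h : t ≤ s) :
    tree (fixIter u r c s) ⊆ tree (fixIter u r c t) := by
  induction s, h using Nat.le_induction with
  | base => exact subset_rfl
  | succ s _ ih => exact (tree_fix_subset _ r _).trans ih

theorem oi_fixIter_of_lt (s : ℕ) {j : ℕ} (hj : j < r) : oi (fixIter u r c s) j = oi u j := by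
  induction s with
  | zero => rfl
  | succ s ih => rw [fixIter, oi_fix_of_lt _ r _ hj, ih]

theorem oi_fixIter_of_le (s : ℕ) {n : ℕ} (hn : r ≤ n) : oi (fixIter u r c s) n = oi u (n + s) := by
  induction s generalizing n with
  | zero => rfl
  | succ s ih =>
    rw [fixIter, oi_fix_of_le _ r _ hn, ih (hn.trans n.le_succ)]
    congr 1
    omega

theorem tree_fixIter_subset (s : ℕ) : tree (fixIter u r c s) ⊆ tree u :=
  tree_fixIter_subset_of_le u r c s.zero_le

theorem refinesN_fixIter (s : ℕ) : RefinesN (tree (fixIter u r c s)) (tree u) r :=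
  refinesN_tree (tree_fixIter_subset u r c s) fun _ => oi_fixIter_of_lt u r c s

theorem apply_oi_of_mem_branches_fixIter {s : ℕ} {a : ℕ → Bool}
    (ha : a ∈ branches (tree (fixIter u r c s))) {t : ℕ} (ht : t < s) : a (oi u (r + t)) = c t := by
  have := apply_oi_of_mem_branches_fix _ r (c t)
    (branches_mono (tree_fixIter_subset_of_le u r c (t := t + 1) ht) ha)
  rwa [oi_fixIter_of_le u r c t le_rfl] at this

theorem mem_cylinder_branch_of_mem_branches_fixIter {s : ℕ} {a : ℕ → Bool}
    (ha : a ∈ branches (tree (fixIter u r c s))) :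
    a ∈ cylinder (branch u fun j => if j < r then a (oi u j) else c (j - r)) (r + s) := by
  refine mem_cylinder_iff.2 fun l hl => eq_of_apply_oi_eq
    (branches_mono (tree_fixIter_subset u r c s) ha) (branch_mem_branches _ _)
    (n := r + s - 1) (fun j hj => ?_) (by have := le_oi u (r + s - 1); omega)
  rw [branch_apply_oi]
  split_ifs with hjr
  · rfl
  · have := apply_oi_of_mem_branches_fixIter u r c ha (t := j - r) (by omega)
    rwa [Nat.add_sub_cancel' (by omega)] at this

end FixIter

end Silver

open Silver

theorem exists_refinesN_approx {T : Set (List Bool)} (hT : SilverTree T) (r : ℕ) :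
    ∃ ref : (Fin r → Bool) → ℕ → Bool, (∀ t, ref t ∈ branches T) ∧ ∀ m, ∃ S, SilverTree S ∧
      RefinesN S T r ∧ ∀ a ∈ branches S, ∃ t, a ∈ cylinder (ref t) m := by
  obtain ⟨u, rfl⟩ := hT
  refine ⟨fun t => branch u fun j => if h : j < r then t ⟨j, h⟩ else false,
    fun t => branch_mem_branches u _, fun m => ⟨_, ⟨_, isSilver_tree _⟩,
    refinesN_fixIter u r (fun _ => false) m, fun a ha => ⟨fun j => a (oi u j), ?_⟩⟩⟩
  refine cylinder_anti _ (Nat.le_add_left m r) ?_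
  convert mem_cylinder_branch_of_mem_branches_fixIter u r _ ha using 3
  funext j
  split_ifs <;> rfl

theorem exists_refinesN_avoid {U : Set (List Bool)} (hU : SilverTree U) (r : ℕ) {ι : Type*}
    [Finite ι] (y : ι → ℕ → Bool) : ∃ V, SilverTree V ∧ RefinesN V U r ∧
      ∀ i, ∃ p, ∀ β ∈ branches V, β p ≠ y i p := by
  obtain ⟨u, rfl⟩ := hU
  obtain ⟨M, ⟨e⟩⟩ := Finite.exists_equiv_fin ι
  let c : ℕ → Bool := fun s => if h : s < M then !y (e.symm ⟨s, h⟩) (oi u (r + s)) else false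
  refine ⟨_, ⟨_, isSilver_tree _⟩, refinesN_fixIter u r c M, fun i =>
    ⟨oi u (r + e i), fun β hβ => ?_⟩⟩
  rw [apply_oi_of_mem_branches_fixIter u r c hβ (e i).isLt]
  simp [c]

/-- if `T`, `U` are Silver trees, `f` is continuous on
`[T] × ω^ω`, `σ ∈ 2^{<ω}`, `v ∈ ω^{<ω}`, `k < ω`, then there are `w ⊇ v` and
Silver trees `S ⊑_{k+1} T`, `V ⊑_{k+1} U` such that `f(a,x) ∉ σ⊕[V]` for all
`a ∈ [S]` and `x ∈ B_w`. -/
theorem stmt11 (T U : Set (List Bool)) (hT : SilverTree T) (hU : SilverTree U)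
    (f : (ℕ → Bool) × (ℕ → ℕ) → (ℕ → Bool))
    (hf : ContinuousOn f (branches T ×ˢ (univ : Set (ℕ → ℕ))))
    (σ : List Bool) (v : List ℕ) (k : ℕ) :
    ∃ w : List ℕ, v <+: w ∧
      ∃ S V : Set (List Bool),
        SilverTree S ∧ SilverTree V ∧
        RefinesN S T (k + 1) ∧ RefinesN V U (k + 1) ∧
        ∀ a ∈ branches S, ∀ x ∈ baire w,
          f (a, x) ∉ shiftR σ '' branches V := by
  obtain ⟨ref, href, happrox⟩ := exists_refinesN_approx hT (k + 1)
  let x₀ : ℕ → ℕ := fun l => v.getD l 0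
  obtain ⟨V, hV, hVU, hVavoid⟩ :=
    exists_refinesN_avoid hU (k + 1) fun t => shiftR σ (f (ref t, x₀))
  choose p hp using hVavoid
  choose n hn using fun t => exists_cylinder_eq_of_continuousOn
    ((continuous_apply (p t)).comp_continuousOn hf) (href t) x₀
  let m := max v.length (Finset.univ.sup n)
  obtain ⟨S, hS, hST, hSapprox⟩ := happrox m
  refine ⟨List.ofFn fun l : Fin m => x₀ l, List.prefix_ofFn_getD (le_max_left _ _) 0, S, V, hS, hV,
    hST, hVU, fun a ha x hx ⟨β, hβ, hfβ⟩ => ?_⟩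
  obtain ⟨t, hat⟩ := hSapprox a ha
  have hnm : n t ≤ m := (Finset.le_sup (Finset.mem_univ t)).trans (le_max_right _ _)
  have hfa : f (a, x) (p t) = f (ref t, x₀) (p t) := hn t a (branches_mono hST.1 ha) x
    (cylinder_anti _ hnm hat) (cylinder_anti _ hnm (baire_ofFn x₀ m ▸ hx))
  refine hp t β hβ ?_
  rw [← shiftR_shiftR σ β, hfβ]
  simp only [shiftR, hfa]
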